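/- For all k ≥ 1 and all n with 0 ≤ n ≤ 2^(2k-1) − 1, s(n + 2^(2k)) = s(n) + 2^k. -/

import Mathlib

/-!
Pairing the terms `a(2i)` and `a(2i+1)` gives `s(2n+1) = s(n) + t(n)` and `t(2n+1) = s(n) - t(n)`,
where `t` is the alternating partial sum; two steps of this recursion from `s = t = 1` at `n = 0`
give `s(4^k - 1) = t(4^k - 1) = 2^k`. Moreover `a(i + 2^(m+1)) = a(i)` for `i < 2^m`, since adding
`2^(m+1)` does not change the number of adjacent `11` blocks in the binary expansion of such `i`.
Hence for `n < 2^(2k-1)` the sum up to `n + 4^k` is a full block `s(4^k - 1) = 2^k` plus `s(n)`.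
-/

def rs : ℕ → ℤ
  | 0 => 1
  | (n+1) =>
    if (n+1) % 2 = 0 then rs ((n+1)/2)
    else (-1)^((n+1)/2) * rs ((n+1)/2)
decreasing_by all_goals exact Nat.div_lt_self (Nat.succ_pos n) (by norm_num)

def s (n : ℕ) : ℤ := ∑ i ∈ Finset.range (n+1), rs i

def t (n : ℕ) : ℤ := ∑ i ∈ Finset.range (n+1), (-1)^i * rs i

open Finset

theorem Finset.sum_range_two_mul {M : Type*} [AddCommMonoid M] (f : ℕ → M) (n : ℕ) :
    ∑ i ∈ range (2 * n), f i = ∑ i ∈ range n, (f (2 * i) + f (2 * i + 1)) := by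
  induction n with
  | zero => simp
  | succ n ih =>
    rw [show 2 * (n + 1) = 2 * n + 1 + 1 by ring, sum_range_succ, sum_range_succ, ih,
      sum_range_succ, add_assoc]

lemma rs_zero : rs 0 = 1 := by
  simp [rs]

lemma rs_two_mul (n : ℕ) : rs (2 * n) = rs n := by
  cases n with
  | zero => rfl
  | succ m =>
    rw [show 2 * (m + 1) = (2 * m + 1) + 1 by ring, rs]
    simp [show (2 * m + 1 + 1) % 2 = 0 by omega, show (2 * m + 1 + 1) / 2 = m + 1 by omega]

lemma rs_two_mul_add_one (n : ℕ) : rs (2 * n + 1) = (-1) ^ n * rs n := by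
  rw [rs]
  simp [show (2 * n + 1) / 2 = n by omega]

lemma s_two_mul_add_one (n : ℕ) : s (2 * n + 1) = s n + t n := by
  rw [s, show 2 * n + 1 + 1 = 2 * (n + 1) by ring, sum_range_two_mul, s, t, ← sum_add_distrib]
  simp only [rs_two_mul, rs_two_mul_add_one]

lemma t_two_mul_add_one (n : ℕ) : t (2 * n + 1) = s n - t n := by
  rw [t, show 2 * n + 1 + 1 = 2 * (n + 1) by ring, sum_range_two_mul, s, t, ← sum_sub_distrib]
  refine sum_congr rfl fun i _ => ?_
  rw [rs_two_mul, rs_two_mul_add_one, pow_succ, pow_mul]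
  ring

lemma s_pred_eq_sum {N : ℕ} (hN : 0 < N) : s (N - 1) = ∑ i ∈ range N, rs i := by
  rw [s, Nat.sub_add_cancel hN]

lemma s_and_t_four_pow_sub_one (k : ℕ) :
    s (2 ^ (2 * k) - 1) = 2 ^ k ∧ t (2 ^ (2 * k) - 1) = 2 ^ k := by
  induction k with
  | zero => simp [s, t, rs_zero]
  | succ k ih =>
    have hN : 2 ^ (2 * (k + 1)) - 1 = 2 * (2 * (2 ^ (2 * k) - 1) + 1) + 1 := by
      have : 0 < 2 ^ (2 * k) := by positivity
      rw [mul_add, pow_add]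
      omega
    simp only [hN, s_two_mul_add_one, t_two_mul_add_one, ih.1, ih.2]
    constructor <;> ring

lemma rs_add_two_pow_succ {m i : ℕ} (hi : i < 2 ^ m) : rs (i + 2 ^ (m + 1)) = rs i := by
  induction m generalizing i with
  | zero =>
    obtain rfl : i = 0 := by omega
    rw [show 0 + 2 ^ (0 + 1) = 2 * (2 * 0 + 1) by rfl, rs_two_mul, rs_two_mul_add_one]
    simp
  | succ m ih =>
    obtain ⟨j, rfl | rfl⟩ := Nat.even_or_odd' i
    · rw [show 2 * j + 2 ^ (m + 1 + 1) = 2 * (j + 2 ^ (m + 1)) by ring, rs_two_mul, rs_two_mul,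
        ih (by omega)]
    · have hpar : ((-1 : ℤ)) ^ (j + 2 ^ (m + 1)) = (-1) ^ j := by
        rw [pow_add, (Nat.even_pow.mpr ⟨even_two, m.succ_ne_zero⟩).neg_one_pow, mul_one]
      rw [show 2 * j + 1 + 2 ^ (m + 1 + 1) = 2 * (j + 2 ^ (m + 1)) + 1 by ring,
        rs_two_mul_add_one, rs_two_mul_add_one, hpar, ih (by omega)]

lemma s_add_two_pow_succ {m n : ℕ} (hn : n < 2 ^ m) :
    s (n + 2 ^ (m + 1)) = s n + s (2 ^ (m + 1) - 1) := by
  rw [s_pred_eq_sum (by positivity), s, s, show n + 2 ^ (m + 1) + 1 = 2 ^ (m + 1) + (n + 1) by ring,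
    sum_range_add, add_comm]
  refine congrArg₂ _ (sum_congr rfl fun i hi => ?_) rfl
  rw [add_comm]
  exact rs_add_two_pow_succ (by rw [mem_range] at hi; omega)

theorem stmt7 : ∀ k : ℕ, 1 ≤ k → ∀ n : ℕ, n ≤ 2^(2*k-1) - 1 →
    s (n + 2^(2*k)) = s n + 2^k := by
  intro k hk n hn
  have hsucc : 2 * k = (2 * k - 1) + 1 := by omega
  have hlt : n < 2 ^ (2 * k - 1) := by
    have : 0 < 2 ^ (2 * k - 1) := by positivity
    omega
  rw [hsucc, s_add_two_pow_succ hlt, ← hsucc, (s_and_t_four_pow_sub_one k).1]
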